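/- The language L = { z_k : k ≥ 0 } where z_k = (c·d^1)(c·d^2)⋯(c·d^k)·e·f over alphabet {c, d, e, f} is not context-free. -/

import Mathlib

/-- Abstracted alphabet of the trace language of the 2-counter type `iter`:
`c` stands for `?c`, `d` for `!c`, `e` for `?d`, `f` for `end`. -/
inductive IterSym : Type
  | c | d | e | f
deriving DecidableEq

instance : Fintype IterSym where
  elems := {IterSym.c, IterSym.d, IterSym.e, IterSym.f}
  complete := by intro x; cases x <;> simp

/-- The word `z_k = (c·d^1)(c·d^2)⋯(c·d^k)·e·f`. -/
def zWord (k : ℕ) : List IterSym :=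
  ((List.range k).map fun i => IterSym.c :: List.replicate (i + 1) IterSym.d).flatten ++
    [IterSym.e, IterSym.f]

/-!
Descend in a parse tree of a long word from the root, always into a child of longest yield.
The yield shrinks, by at most the factor `m` (the longest right-hand side), only at nodes whose
other children yield something, and such a node derives every nonterminal below it inside a
nonempty terminal context. So for a word longer than `m ^ n` (`n` nonterminals) the descent meets
some `B` below such an occurrence of `B` itself: `B ⇒* v B y` with `v ++ y ≠ []`, and
`u vⁱ x yⁱ z` lies in the language for every `i`.

In `z_k` the letters `c, d, e, f` occur `k`, `k(k+1)/2`, `1`, `1` times. Along a pumped family every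
letter count is affine in `i`, and `k(k+1)/2` can be affine in an affine `k` only if `k` is
constant; so `v` and `y` contain no letter at all.
-/

namespace ContextFreeGrammar

variable {T : Type*}

/-- `g.ParsesIn h α w`: the sentential form `α` derives the terminal word `w` through a parse
forest of height at most `h`. -/
inductive ParsesIn (g : ContextFreeGrammar T) : ℕ → List (Symbol T g.NT) → List T → Prop
  | nil {h : ℕ} : ParsesIn g h [] []
  | cons_terminal {h : ℕ} (t : T) {α : List (Symbol T g.NT)} {w : List T} :
      ParsesIn g h α w → ParsesIn g h (.terminal t :: α) (t :: w)
  | cons_nonterminal {h : ℕ} {r : ContextFreeRule T g.NT} {α : List (Symbol T g.NT)}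
      {u w : List T} : r ∈ g.rules → ParsesIn g h r.output u → ParsesIn g (h + 1) α w →
      ParsesIn g (h + 1) (.nonterminal r.input :: α) (u ++ w)

variable {g : ContextFreeGrammar T}

theorem Derives.surround {α β : List (Symbol T g.NT)} (hαβ : g.Derives α β)
    (p q : List (Symbol T g.NT)) : g.Derives (p ++ α ++ q) (p ++ β ++ q) := by
  simpa using (hαβ.append_right q).append_left p

namespace ParsesIn

variable {h : ℕ} {α β : List (Symbol T g.NT)} {u w : List T}

theorem mono {h' : ℕ} (hα : g.ParsesIn h α w) (hh : h ≤ h') : g.ParsesIn h' α w := by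
  induction hα generalizing h' with
  | nil => exact nil
  | cons_terminal t _ ih => exact cons_terminal t (ih hh)
  | cons_nonterminal hr _ _ ih₁ ih₂ =>
    obtain ⟨h', rfl⟩ : ∃ k, h' = k + 1 := ⟨h' - 1, by omega⟩
    exact cons_nonterminal hr (ih₁ (by omega)) (ih₂ hh)

theorem append (hα : g.ParsesIn h α u) (hβ : g.ParsesIn h β w) :
    g.ParsesIn h (α ++ β) (u ++ w) := by
  induction hα with
  | nil => exact hβ
  | cons_terminal t _ ih => exact cons_terminal t (ih hβ)
  | cons_nonterminal hr hu _ _ ih => simpa using cons_nonterminal hr hu (ih hβ)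

theorem exists_of_append (hw : g.ParsesIn h (α ++ β) w) :
    ∃ u v, w = u ++ v ∧ g.ParsesIn h α u ∧ g.ParsesIn h β v := by
  induction α generalizing w with
  | nil => exact ⟨[], w, rfl, nil, hw⟩
  | cons X α ih =>
    cases hw with
    | cons_terminal t hw =>
      obtain ⟨u, v, rfl, hu, hv⟩ := ih hw
      exact ⟨t :: u, v, rfl, cons_terminal t hu, hv⟩
    | cons_nonterminal hr hx hw =>
      obtain ⟨u, v, rfl, hu, hv⟩ := ih hw
      exact ⟨_ ++ u, v, by simp, cons_nonterminal hr hx hu, hv⟩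

theorem eq_of_terminal {t : T} (hw : g.ParsesIn h [.terminal t] w) : w = [t] := by
  cases hw with
  | cons_terminal t hw => cases hw; rfl

theorem exists_rule_of_nonterminal {A : g.NT} (hw : g.ParsesIn (h + 1) [.nonterminal A] w) :
    ∃ r ∈ g.rules, r.input = A ∧ g.ParsesIn h r.output w := by
  cases hw with
  | cons_nonterminal hr hu hw => cases hw; exact ⟨_, hr, rfl, by simpa⟩

theorem nonterminal_of_rule {r : ContextFreeRule T g.NT} (hr : r ∈ g.rules)
    (hw : g.ParsesIn h r.output w) : g.ParsesIn (h + 1) [.nonterminal r.input] w := by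
  simpa using cons_nonterminal hr hw nil

theorem derives (hα : g.ParsesIn h α w) : g.Derives α (w.map .terminal) := by
  induction hα with
  | nil => exact Derives.refl []
  | cons_terminal t _ ih => simpa using ih.append_left [.terminal t]
  | cons_nonterminal hr _ _ ih₁ ih₂ =>
    have hrule : g.Produces [.nonterminal _] _ := ⟨_, hr, ContextFreeRule.Rewrites.input_output⟩
    simpa using ((hrule.single.trans ih₁).append_right _).trans (ih₂.append_left _)

theorem exists_longest_tree (hβ : g.ParsesIn h β w) (hw : w ≠ []) :
    ∃ β₁ X β₂ p x q, β = β₁ ++ X :: β₂ ∧ w = p ++ x ++ q ∧ g.ParsesIn h β₁ p ∧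
      g.ParsesIn h [X] x ∧ g.ParsesIn h β₂ q ∧ w.length ≤ β.length * x.length := by
  induction β generalizing w with
  | nil => cases hβ; contradiction
  | cons X β ih =>
    obtain ⟨x, w', rfl, hX, hβ'⟩ := exists_of_append (α := [X]) hβ
    rcases eq_or_ne w' [] with rfl | hw'
    · exact ⟨[], X, β, [], x, [], rfl, by simp, nil, hX, hβ', by simp; nlinarith⟩
    obtain ⟨β₁, Y, β₂, p, y, q, rfl, rfl, hp, hY, hq, hlen⟩ := ih hβ' hw'
    rcases le_total x.length y.length with hxy | hyx
    · exact ⟨X :: β₁, Y, β₂, x ++ p, y, q, rfl, by simp, hX.append hp, hY, hq, by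
        simp only [List.length_append, List.length_cons] at hlen ⊢; nlinarith⟩
    · exact ⟨[], X, β₁ ++ Y :: β₂, [], x, p ++ y ++ q, rfl, by simp, nil, hX, hβ', by
        simp only [List.length_append, List.length_cons] at hlen ⊢; nlinarith⟩

end ParsesIn

theorem Derives.exists_parsesIn {α : List (Symbol T g.NT)} {w : List T}
    (hα : g.Derives α (w.map .terminal)) : ∃ h, g.ParsesIn h α w := by
  induction hα using Relation.ReflTransGen.head_induction_on with
  | refl =>
    refine ⟨0, ?_⟩
    induction w with
    | nil => exact .nil
    | cons t w ih => exact .cons_terminal t ih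
  | head hαβ _ ih =>
    obtain ⟨h, hβ⟩ := ih
    obtain ⟨r, hr, hrw⟩ := hαβ
    obtain ⟨p, q, rfl, rfl⟩ := hrw.exists_parts
    obtain ⟨wpr, wq, rfl, hpr, hq⟩ := ParsesIn.exists_of_append hβ
    obtain ⟨wp, wr, rfl, hp, hr'⟩ := ParsesIn.exists_of_append hpr
    exact ⟨h + 1, ((hp.mono h.le_succ).append (.nonterminal_of_rule hr hr')).append
      (hq.mono h.le_succ)⟩

variable (g) in
def Encloses (B A : g.NT) : Prop :=
  ∃ v y : List T, v ++ y ≠ [] ∧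
    g.Derives [.nonterminal B] (v.map .terminal ++ [.nonterminal A] ++ y.map .terminal)

theorem Encloses.trans_derives {A B C : g.NT} {p q : List T} (hBA : g.Encloses B A)
    (hAC : g.Derives [.nonterminal A] (p.map .terminal ++ [.nonterminal C] ++ q.map .terminal)) :
    g.Encloses B C := by
  obtain ⟨v, y, hvy, hB⟩ := hBA
  refine ⟨v ++ p, q ++ y, by simp_all, ?_⟩
  simpa using hB.trans (hAC.surround (v.map .terminal) (y.map .terminal))

variable (g) in
def ReachesSelfEnclosing (A : g.NT) : Prop :=
  ∃ (B : g.NT) (u z x : List T),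
    g.Derives [.nonterminal A] (u.map .terminal ++ [.nonterminal B] ++ z.map .terminal) ∧
    g.Encloses B B ∧ g.Derives [.nonterminal B] (x.map .terminal)

theorem ReachesSelfEnclosing.of_derives {A C : g.NT} {p q : List T}
    (hC : g.ReachesSelfEnclosing C)
    (hAC : g.Derives [.nonterminal A] (p.map .terminal ++ [.nonterminal C] ++ q.map .terminal)) :
    g.ReachesSelfEnclosing A := by
  obtain ⟨B, u, z, x, hCB, hBB, hBx⟩ := hC
  exact ⟨B, p ++ u, z ++ q, x, by simpa using hAC.trans (hCB.surround _ _), hBB, hBx⟩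

theorem reachesSelfEnclosing_of_parsesIn [DecidableEq g.NT] {m : ℕ}
    (hm : ∀ r ∈ g.rules, r.output.length ≤ m) (h : ℕ) (A : g.NT) (w : List T)
    (s : Finset g.NT) (hw : g.ParsesIn h [.nonterminal A] w) (hs : ∀ B ∈ s, g.Encloses B A)
    (hlen : m ^ (g.rules.image ContextFreeRule.input \ s).card < w.length) :
    g.ReachesSelfEnclosing A := by
  induction h generalizing A w s with
  | zero => cases hw
  | succ h ih =>
    by_cases hA : A ∈ s
    · exact ⟨A, [], [], w, by simpa using Derives.refl _, hs A hA, hw.derives⟩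
    obtain ⟨r, hr, rfl, hchildren⟩ := hw.exists_rule_of_nonterminal
    have hAin : r.input ∈ g.rules.image ContextFreeRule.input \ s :=
      Finset.mem_sdiff.mpr ⟨Finset.mem_image_of_mem _ hr, hA⟩
    obtain ⟨k, hk⟩ : ∃ k, (g.rules.image ContextFreeRule.input \ s).card = k + 1 :=
      Nat.exists_eq_add_one.mpr (Finset.card_pos.mpr ⟨_, hAin⟩)
    rw [hk] at hlen
    obtain ⟨β₁, X, β₂, p, x, q, hout, rfl, hp, hX, hq, hwx⟩ :=
      hchildren.exists_longest_tree (List.ne_nil_of_length_pos (by omega))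
    replace hwx : (p ++ x ++ q).length ≤ m * x.length :=
      hwx.trans (Nat.mul_le_mul_right _ (hm r hr))
    cases X with
    | terminal t =>
      obtain rfl := hX.eq_of_terminal
      have := Nat.le_self_pow (by omega : k + 1 ≠ 0) m
      simp only [List.length_singleton, mul_one] at hwx
      omega
    | nonterminal C =>
      have hAC : g.Derives [.nonterminal r.input]
          (p.map .terminal ++ [.nonterminal C] ++ q.map .terminal) := by
        have hrule : g.Produces [.nonterminal r.input] r.output := ⟨r, hr, .input_output⟩
        have hβ₁ := hp.derives.append_right ([.nonterminal C] ++ β₂)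
        have hβ₂ := hq.derives.append_left (p.map .terminal ++ [.nonterminal C])
        simp only [hout, List.append_assoc, List.singleton_append] at hrule hβ₁ hβ₂ ⊢
        exact hrule.single.trans (hβ₁.trans hβ₂)
      refine ReachesSelfEnclosing.of_derives ?_ hAC
      by_cases hpq : p ++ q = []
      · obtain ⟨rfl, rfl⟩ := List.append_eq_nil_iff.mp hpq
        exact ih C x s hX (fun B hB => (hs B hB).trans_derives hAC) (by simpa [hk] using hlen)
      · refine ih C x (insert r.input s) hX ?_ ?_
        · intro B hB
          rcases Finset.mem_insert.mp hB with rfl | hB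
          · exact ⟨p, q, hpq, hAC⟩
          · exact (hs B hB).trans_derives hAC
        · rw [Finset.sdiff_insert, Finset.card_erase_of_mem hAin, hk, Nat.add_sub_cancel]
          rw [pow_succ'] at hlen
          exact lt_of_mul_lt_mul_left (hlen.trans_le hwx) (Nat.zero_le m)

theorem Derives.pump {B : g.NT} {v y : List T}
    (hB : g.Derives [.nonterminal B] (v.map .terminal ++ [.nonterminal B] ++ y.map .terminal))
    (i : ℕ) : g.Derives [.nonterminal B] ((List.replicate i v).flatten.map .terminal ++
      [.nonterminal B] ++ (List.replicate i y).flatten.map .terminal) := by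
  induction i with
  | zero => simpa using Derives.refl _
  | succ i ih =>
    rw [List.replicate_succ, List.replicate_succ', List.flatten_cons, List.flatten_append]
    simpa using hB.trans (ih.surround (v.map .terminal) (y.map .terminal))

end ContextFreeGrammar

open ContextFreeGrammar in
theorem Language.IsContextFree.exists_pumping {T : Type*} {L : Language T}
    (hL : L.IsContextFree) (hlong : ∀ N, ∃ w ∈ L, N < w.length) :
    ∃ u v x y z : List T, v ++ y ≠ [] ∧
      ∀ i, u ++ (List.replicate i v).flatten ++ x ++ (List.replicate i y).flatten ++ z ∈ L := by
  classical
  obtain ⟨g, rfl⟩ := hL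
  obtain ⟨w, hw, hlen⟩ :=
    hlong ((g.rules.sup fun r => r.output.length) ^ (g.rules.image ContextFreeRule.input).card)
  obtain ⟨h, hparse⟩ := ((g.mem_language_iff w).mp hw).exists_parsesIn
  obtain ⟨B, u, z, x, hSB, ⟨v, y, hvy, hBB⟩, hBx⟩ := reachesSelfEnclosing_of_parsesIn
    (fun r hr => Finset.le_sup (f := fun r => r.output.length) hr) h g.initial w ∅
    (by simpa using hparse) (by simp) (by simpa using hlen)
  refine ⟨u, v, x, y, z, hvy, fun i => (g.mem_language_iff _).mpr ?_⟩
  have hpump := hSB.trans ((hBB.pump i).surround (u.map .terminal) (z.map .terminal))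
  have hx := hBx.surround ((u ++ (List.replicate i v).flatten).map .terminal)
    (((List.replicate i y).flatten ++ z).map .terminal)
  simp only [List.map_append, List.append_assoc] at hpump hx ⊢
  exact hpump.trans hx

theorem List.count_pump {α : Type*} [BEq α] (a : α) (u v x y z : List α) (i : ℕ) :
    (u ++ (List.replicate i v).flatten ++ x ++ (List.replicate i y).flatten ++ z).count a =
      (u ++ x ++ z).count a + i * (v ++ y).count a := by
  simp only [List.count_append, List.count_flatten, List.map_replicate, List.sum_replicate,
    smul_eq_mul]
  ring

theorem count_zWord_succ (a : IterSym) (k : ℕ) : (zWord (k + 1)).count a =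
    (zWord k).count a + (IterSym.c :: List.replicate (k + 1) IterSym.d).count a := by
  simp only [zWord, List.range_succ, List.map_append, List.flatten_append, List.count_append,
    List.map_singleton, List.flatten_singleton]
  ring

theorem count_zWord_c (k : ℕ) : (zWord k).count .c = k := by
  induction k with
  | zero => rfl
  | succ k ih => simp [count_zWord_succ, ih, List.count_replicate]

theorem two_mul_count_zWord_d (k : ℕ) : 2 * (zWord k).count .d = k * (k + 1) := by
  induction k with
  | zero => rfl
  | succ k ih =>
    rw [count_zWord_succ, mul_add, ih]
    rw [List.count_cons_of_ne (by decide), List.count_replicate_self]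
    ring

theorem count_zWord_e (k : ℕ) : (zWord k).count .e = 1 := by
  induction k with
  | zero => rfl
  | succ k ih => simp [count_zWord_succ, ih, List.count_replicate]

theorem count_zWord_f (k : ℕ) : (zWord k).count .f = 1 := by
  induction k with
  | zero => rfl
  | succ k ih => simp [count_zWord_succ, ih, List.count_replicate]

theorem pump_zWord_eq_nil {u v x y z : List IterSym}
    (hpump : ∀ i, ∃ k, u ++ (List.replicate i v).flatten ++ x ++ (List.replicate i y).flatten ++ z
      = zWord k) : v ++ y = [] := by
  have hcounts (i : ℕ) : ∃ k, k = (u ++ x ++ z).count .c + i * (v ++ y).count .c ∧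
      2 * ((u ++ x ++ z).count .d + i * (v ++ y).count .d) = k * (k + 1) ∧
      (u ++ x ++ z).count .e + i * (v ++ y).count .e = 1 ∧
      (u ++ x ++ z).count .f + i * (v ++ y).count .f = 1 := by
    obtain ⟨k, hk⟩ := hpump i
    refine ⟨k, ?_, ?_, ?_, ?_⟩ <;> simp only [← List.count_pump, hk, count_zWord_c,
      two_mul_count_zWord_d, count_zWord_e, count_zWord_f]
  obtain ⟨k₀, hc₀, hd₀, he₀, hf₀⟩ := hcounts 0
  obtain ⟨k₁, hc₁, hd₁, he₁, hf₁⟩ := hcounts 1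
  obtain ⟨k₂, hc₂, hd₂, -, -⟩ := hcounts 2
  -- The second difference of `kᵢ (kᵢ + 1)` at `i = 0, 1, 2` is `2 a²`, `a` the `c`-count of `v ++ y`;
  -- that of the affine left-hand side is `0`.
  have hc : (v ++ y).count .c = 0 := by
    subst hc₀ hc₁ hc₂
    nlinarith
  have hzero : ∀ a, (v ++ y).count a = 0 := by
    intro a
    cases a with
    | c => exact hc
    | d => rw [hc] at hc₁; subst hc₀ hc₁; nlinarith
    | e => omega
    | f => omega
  exact List.eq_nil_iff_forall_not_mem.mpr fun a ha => (List.count_pos_iff.mpr ha).ne' (hzero a)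

/-- The language `{ z_k : k ≥ 0 }` (an abstraction of `L(iter)`) is not context-free. -/
theorem iter_language_not_contextFree :
    ¬ Language.IsContextFree {w : List IterSym | ∃ k : ℕ, w = zWord k} := by
  intro hL
  obtain ⟨u, v, x, y, z, hvy, hpump⟩ := hL.exists_pumping fun N =>
    ⟨zWord (N + 1), ⟨N + 1, rfl⟩, (count_zWord_c (N + 1)).symm.trans_le List.count_le_length⟩
  exact hvy (pump_zWord_eq_nil hpump)
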